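/- arXiv:0903.2108 — 2 statements merged into one kernel-verified Lean document; each statement's English description precedes it below -/
import Mathlib

section
/- In a Fibonacci tree (with Fibonacci sequence f₁ = 1, f₂ = 2, fₙ₊₂ = fₙ₊₁ + fₙ, where each white node has three children arranged as white-black-white and each black node has two children arranged as black-white, the tree spanning a sector of the ternary heptagrid), the number of nodes on level n (the root being level 0) equals f₍₂ₙ₊₁₎. -/
/-- Number of nodes on level `n` of a Fibonacci tree equals `f (2n+1)`. -/
theorem fibtree_level_count
    (f W B : ℕ → ℕ)
    (hf1 : f 1 = 1) (hf2 : f 2 = 2)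
    (hf : ∀ n, f (n + 2) = f (n + 1) + f n)
    (hW0 : W 0 = 1) (hB0 : B 0 = 0)
    (hW : ∀ n, W (n + 1) = 2 * W n + B n)
    (hB : ∀ n, B (n + 1) = W n + B n) :
    ∀ n, W n + B n = f (2 * n + 1) := by
  have key : ∀ n, W (n + 1) = f (2 * n + 2) ∧ B (n + 1) = f (2 * n + 1) := by
    intro n
    induction n with
    | zero =>
      constructor
      · rw [hW, hW0, hB0, hf2]
      · rw [hB, hW0, hB0, hf1]
    | succ k ih =>
      obtain ⟨ihW, ihB⟩ := ih
      have h3 : f (2 * (k + 1) + 2) = f (2 * k + 3) + f (2 * k + 2) := by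
        rw [show 2 * (k + 1) + 2 = 2 * k + 2 + 2 by ring]
        exact hf (2 * k + 2)
      have h4 : f (2 * k + 3) = f (2 * k + 2) + f (2 * k + 1) := hf (2 * k + 1)
      have h5 : f (2 * (k + 1) + 1) = f (2 * k + 2) + f (2 * k + 1) := by
        rw [show 2 * (k + 1) + 1 = 2 * k + 1 + 2 by ring]
        exact hf (2 * k + 1)
      constructor
      · rw [hW, ihW, ihB, h3, h4]; ring
      · rw [hB, ihW, ihB, h5]
  intro n
  cases n with
  | zero => simp [hW0, hB0, hf1]
  | succ k =>
    obtain ⟨kW, kB⟩ := key k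
    have h5 : f (2 * (k + 1) + 1) = f (2 * k + 2) + f (2 * k + 1) := by
      rw [show 2 * (k + 1) + 1 = 2 * k + 1 + 2 by ring]
      exact hf (2 * k + 1)
    rw [kW, kB, h5]
end

section
/- A table of transition rules for a cellular automaton on the heptagrid is rotation invariant if and only if for any two rules η and ε in the table, whenever the minimal rotated forms min(η) and min(ε) have equal contexts, the new states of η and ε coincide. -/
/-- Cyclic rotation of the last 7 coordinates of a context, fixing coordinate 0. -/
def rotC {Q : Type*} (k : Fin 7) (c : Fin 8 → Q) : Fin 8 → Q :=
  fun j => if j = 0 then c 0 else c ⟨(j.val - 1 + k.val) % 7 + 1, by omega⟩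

/-- The lexicographically minimal rotated form of a context, comparing contexts
via the lexicographic order on the corresponding length-8 words. -/
noncomputable def minFormC {Q : Type*} [LinearOrder Q] (c : Fin 8 → Q) : Fin 8 → Q :=
  letI : LinearOrder (Fin 8 → Q) := LinearOrder.lift' List.ofFn List.ofFn_injective
  (Finset.univ.image fun k : Fin 7 => rotC k c).min'
    (Finset.Nonempty.image Finset.univ_nonempty _)

lemma rotC_rotC {Q : Type*} (j k : Fin 7) (c : Fin 8 → Q) :
    rotC j (rotC k c) = rotC (j + k) c := by
  funext i
  by_cases hi : i = 0
  · simp [rotC, hi]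
  · have h1 : i.val ≥ 1 := Fin.pos_of_ne_zero hi
    simp only [rotC, if_neg hi]
    rw [if_neg (show (⟨(i.val - 1 + j.val) % 7 + 1, by omega⟩ : Fin 8) ≠ 0 by
      simp [Fin.ext_iff])]
    congr 1
    simp only [Fin.ext_iff, Fin.add_def]
    omega

lemma orbit_rotC {Q : Type*} [DecidableEq (Fin 8 → Q)] (k : Fin 7) (c : Fin 8 → Q) :
    (Finset.univ.image fun j : Fin 7 => rotC j (rotC k c)) =
      (Finset.univ.image fun j : Fin 7 => rotC j c) := by
  ext a
  simp only [Finset.mem_image, Finset.mem_univ, true_and]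
  constructor
  · rintro ⟨j, rfl⟩; exact ⟨j + k, (rotC_rotC j k c).symm⟩
  · rintro ⟨j, rfl⟩
    exact ⟨j - k, by rw [rotC_rotC, sub_add_cancel]⟩

set_option maxHeartbeats 1000000 in
lemma minFormC_rotC {Q : Type*} [LinearOrder Q] (k : Fin 7) (c : Fin 8 → Q) :
    minFormC (rotC k c) = minFormC c := by
  letI : LinearOrder (Fin 8 → Q) := LinearOrder.lift' List.ofFn List.ofFn_injective
  unfold minFormC
  congr 1
  exact orbit_rotC k c

lemma exists_minFormC {Q : Type*} [LinearOrder Q] (c : Fin 8 → Q) :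
    ∃ k : Fin 7, minFormC c = rotC k c := by
  letI : LinearOrder (Fin 8 → Q) := LinearOrder.lift' List.ofFn List.ofFn_injective
  have h : minFormC c ∈ Finset.univ.image (fun k : Fin 7 => rotC k c) :=
    Finset.min'_mem _ _
  simp only [Finset.mem_image, Finset.mem_univ, true_and] at h
  obtain ⟨k, hk⟩ := h
  exact ⟨k, hk.symm⟩

/-- A deterministic rule table closed under rotation of contexts is rotation invariant
iff any two rules whose minimal rotated forms have equal contexts have the same new state. -/
theorem rotation_invariant_iff_minForm
    {Q : Type*} [LinearOrder Q] [Fintype Q]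
    (T : Set ((Fin 8 → Q) × Q))
    (hdet : ∀ r ∈ T, ∀ r' ∈ T, r.1 = r'.1 → r = r')
    (hclosed : ∀ r ∈ T, ∀ k : Fin 7, ∃ r' ∈ T, r'.1 = rotC k r.1) :
    (∀ r ∈ T, ∀ k : Fin 7, (rotC k r.1, r.2) ∈ T) ↔
      (∀ η ∈ T, ∀ ε ∈ T, minFormC η.1 = minFormC ε.1 → η.2 = ε.2) := by
  constructor
  · intro hinv η hη ε hε hmin
    obtain ⟨k, hk⟩ := exists_minFormC η.1
    obtain ⟨l, hl⟩ := exists_minFormC ε.1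
    have h1 := hinv η hη k
    have h2 := hinv ε hε l
    have h3 := hdet _ h1 _ h2 (by simp only; rw [← hk, ← hl, hmin])
    simpa using congrArg Prod.snd h3
  · intro hmin r hr k
    obtain ⟨r', hr', hr'1⟩ := hclosed r hr k
    have hm : minFormC r'.1 = minFormC r.1 := by rw [hr'1, minFormC_rotC]
    have hs := hmin r' hr' r hr hm
    have heq : (rotC k r.1, r.2) = r' := Prod.ext hr'1.symm hs.symm
    rw [heq]; exact hr'
end
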